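/- arXiv:2502.06340 — 2 statements merged into one kernel-verified Lean document; each statement's English description precedes it below -/
import Mathlib

section
/- ∫₀^1 (−log y / y) · sech((π/2) log y) dy = 8G/π², where G is Catalan's constant. -/
/-!
Substituting `y = e^{-x}` turns the integral into `∫₀^∞ x / cosh (π x / 2) dx`. For `z > 0`,
`1 / cosh z = 2 e^{-z} / (1 + e^{-2z}) = 2 ∑ (-1)^k e^{-(2k+1) z}`, and integrating term by term
with `∫₀^∞ x^{s-1} e^{-b x} dx = Γ(s) / b^s` gives, more generally,
`∫₀^∞ x^{s-1} / cosh (a x) dx = 2 Γ(s) / a^s ∑ (-1)^k / (2k+1)^s` for `s > 1`, `a > 0`.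
The interchange is justified because `∑ 1 / (2k+1)^s` converges.
-/

open MeasureTheory Set Real

lemma image_exp_neg_Ioi (a : ℝ) : (fun x ↦ exp (-x)) '' Ioi a = Ioo 0 (exp (-a)) := by
  rw [← image_exp_Iio, ← image_neg_Ioi, image_image]

theorem integral_comp_exp_neg_Ioi {E : Type*} [NormedAddCommGroup E] [NormedSpace ℝ E]
    (g : ℝ → E) (a : ℝ) :
    ∫ x in Ioi a, exp (-x) • g (exp (-x)) = ∫ y in Ioo 0 (exp (-a)), g y := by
  symm; rw [← image_exp_neg_Ioi]
  simpa [abs_of_pos (exp_pos _)] using integral_image_eq_integral_abs_deriv_smul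
    measurableSet_Ioi (fun x _ ↦ (hasDerivAt_neg x).exp.hasDerivWithinAt)
    (fun x _ y _ hxy ↦ neg_injective (exp_injective hxy)) g

lemma hasSum_inv_cosh {z : ℝ} (hz : 0 < z) :
    HasSum (fun k : ℕ ↦ 2 * (-1) ^ k * exp (-((2 * k + 1) * z))) (cosh z)⁻¹ := by
  have hq : ‖-exp (-(2 * z))‖ < 1 := by
    rw [norm_neg, Real.norm_of_nonneg (exp_pos _).le, exp_lt_one_iff]; linarith
  have hcosh : (cosh z)⁻¹ = 2 * exp (-z) * (1 - -exp (-(2 * z)))⁻¹ := by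
    have hu : exp z ≠ 0 := (exp_pos z).ne'
    rw [cosh_eq, sub_neg_eq_add, show -(2 * z) = -z + -z by ring, exp_add, exp_neg z]
    field_simp
  rw [hcosh]
  refine ((hasSum_geometric_of_norm_lt_one hq).mul_left (2 * exp (-z))).congr_fun fun k ↦ ?_
  rw [neg_pow (exp _), ← exp_nat_mul, show -((2 * k + 1) * z) = -z + k * -(2 * z) by ring,
    exp_add]
  ring

lemma summable_odd_rpow_inv {s : ℝ} (hs : 1 < s) :
    Summable fun k : ℕ ↦ ((2 * k + 1 : ℝ) ^ s)⁻¹ := by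
  have hodd : Function.Injective fun k : ℕ ↦ 2 * k + 1 := fun m n h ↦ by simp_all
  simpa [Function.comp_def] using (summable_nat_rpow_inv.mpr hs).comp_injective hodd

lemma integral_rpow_mul_exp_neg_odd_mul_Ioi {s a : ℝ} (hs : 0 < s) (ha : 0 < a) (k : ℕ) :
    ∫ x in Ioi 0, x ^ (s - 1) * exp (-((2 * k + 1) * (a * x)))
      = Gamma s / a ^ s * ((2 * k + 1 : ℝ) ^ s)⁻¹ := by
  have hk : (0 : ℝ) ≤ 2 * k + 1 := by positivity
  simp_rw [← mul_assoc]
  rw [integral_rpow_mul_exp_neg_mul_Ioi hs (by positivity), one_div, inv_rpow (by positivity),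
    mul_rpow hk ha.le]
  field_simp

theorem integral_rpow_div_cosh_mul_Ioi {s a : ℝ} (hs : 1 < s) (ha : 0 < a) :
    ∫ x in Ioi 0, x ^ (s - 1) / cosh (a * x)
      = 2 * Gamma s / a ^ s * ∑' k : ℕ, (-1) ^ k / (2 * k + 1 : ℝ) ^ s := by
  set G : ℕ → ℝ → ℝ := fun k x ↦ x ^ (s - 1) * exp (-((2 * k + 1) * (a * x)))
  set F : ℕ → ℝ → ℝ := fun k x ↦ 2 * (-1) ^ k * G k x
  have hG : ∀ k, ∫ x in Ioi 0, G k x = Gamma s / a ^ s * ((2 * k + 1 : ℝ) ^ s)⁻¹ :=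
    integral_rpow_mul_exp_neg_odd_mul_Ioi (by linarith) ha
  have hΓ : 0 < Gamma s := Gamma_pos_of_pos (by linarith)
  have hG_int : ∀ k, IntegrableOn (G k) (Ioi 0) := fun k ↦
    .of_integral_ne_zero (by rw [hG k]; positivity)
  have hexpand : ∀ x ∈ Ioi (0 : ℝ), x ^ (s - 1) / cosh (a * x) = ∑' k, F k x := by
    intro x hx
    rw [div_eq_mul_inv, ← ((hasSum_inv_cosh (mul_pos ha hx)).mul_left (x ^ (s - 1))).tsum_eq]
    congr 1 with k
    ring
  have hnorm : ∀ k, ∫ x in Ioi 0, ‖F k x‖ = 2 * ∫ x in Ioi 0, G k x := fun k ↦ by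
    rw [← integral_const_mul]
    refine setIntegral_congr_fun measurableSet_Ioi fun x hx ↦ ?_
    simp [F, G, abs_of_pos (rpow_pos_of_pos (mem_Ioi.mp hx) _)]
  have hsum : Summable fun k ↦ ∫ x in Ioi 0, ‖F k x‖ := by
    simp_rw [hnorm, hG]
    exact ((summable_odd_rpow_inv hs).mul_left _).mul_left _
  rw [setIntegral_congr_fun measurableSet_Ioi hexpand,
    ← (hasSum_integral_of_summable_integral_norm (fun k ↦ (hG_int k).const_mul _) hsum).tsum_eq,
    ← tsum_mul_left]
  congr 1 with k
  rw [integral_const_mul, hG]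
  ring

theorem neg_log_change_of_variable :
    ∫ y in (0:ℝ)..1,
        (-Real.log y / y) *
          (2 / (Real.exp (Real.pi / 2 * Real.log y) + Real.exp (-(Real.pi / 2 * Real.log y))))
      = 8 * (∑' k : ℕ, (-1 : ℝ) ^ k / (1 + 2 * (k : ℝ)) ^ 2) / Real.pi ^ 2 := by
  have hsubst : ∀ x ∈ Ioi (0 : ℝ), exp (-x) • ((-log (exp (-x)) / exp (-x)) *
      (2 / (exp (π / 2 * log (exp (-x))) + exp (-(π / 2 * log (exp (-x)))))))
        = x ^ ((2 : ℝ) - 1) / cosh (π / 2 * x) := fun x _ ↦ by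
    rw [log_exp, cosh_eq, smul_eq_mul, show (2 : ℝ) - 1 = 1 by norm_num, rpow_one]
    field_simp
    ring
  have hI := integral_comp_exp_neg_Ioi (fun y ↦ (-log y / y) *
      (2 / (exp (π / 2 * log y) + exp (-(π / 2 * log y))))) 0
  rw [neg_zero, exp_zero, setIntegral_congr_fun measurableSet_Ioi hsubst,
    integral_rpow_div_cosh_mul_Ioi one_lt_two (by positivity)] at hI
  rw [intervalIntegral.integral_of_le zero_le_one, integral_Ioc_eq_integral_Ioo, ← hI, Gamma_two]
  simp_rw [rpow_two, add_comm (2 * (_ : ℝ)) 1]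
  ring
end

section
/- ∫₀^1 (y/(1−y)³) · sech(πy/(2(1−y))) dy = 8G/π², where G is Catalan's constant. -/
/-!
The substitution `x = y / (1 - y)`, with `dy / (1 - y) ^ 2 = dx`, turns the integral into
`∫₀^∞ x sech (π x / 2) dx`. Expanding `sech t = 2 ∑ₖ (-1)ᵏ e^{-(2k+1)t}` as a geometric series and
integrating term by term with `∫₀^∞ x e^{-c x} dx = 1 / c²` gives
`∑ₖ 2 (-1)ᵏ (2 / ((2k+1) π))² = (8 / π²) ∑ₖ (-1)ᵏ / (2k+1)²`.
-/

open MeasureTheory Set Real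

lemma hasDerivAt_div_one_sub {y : ℝ} (hy : y ≠ 1) :
    HasDerivAt (fun y => y / (1 - y)) ((1 - y) ^ 2)⁻¹ y := by
  have h1 : 1 - y ≠ 0 := sub_ne_zero.mpr hy.symm
  refine ((hasDerivAt_id' y).div ((hasDerivAt_id' y).const_sub 1) h1).congr_deriv ?_
  field_simp
  ring

lemma injOn_div_one_sub : InjOn (fun y : ℝ => y / (1 - y)) {1}ᶜ := by
  intro a ha b hb hab
  have ha' : 1 - a ≠ 0 := sub_ne_zero.mpr (Ne.symm ha)
  have hb' : 1 - b ≠ 0 := sub_ne_zero.mpr (Ne.symm hb)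
  rw [div_eq_div_iff ha' hb'] at hab
  linarith

lemma image_div_one_sub_Ioo : (fun y : ℝ => y / (1 - y)) '' Ioo 0 1 = Ioi 0 := by
  ext x
  constructor
  · rintro ⟨y, ⟨hy₀, hy₁⟩, rfl⟩
    exact div_pos hy₀ (sub_pos.mpr hy₁)
  · intro (hx : 0 < x)
    refine ⟨x / (1 + x), ⟨by positivity, (div_lt_one (by positivity)).mpr (by linarith)⟩, ?_⟩
    dsimp only
    field_simp
    ring

theorem integral_comp_div_one_sub {E : Type*} [NormedAddCommGroup E]
    [NormedSpace ℝ E] (g : ℝ → E) :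
    ∫ y in (0 : ℝ)..1, ((1 - y) ^ 2)⁻¹ • g (y / (1 - y)) = ∫ x in Ioi 0, g x := by
  rw [← image_div_one_sub_Ioo, integral_image_eq_integral_abs_deriv_smul measurableSet_Ioo
    (fun y hy => (hasDerivAt_div_one_sub hy.2.ne).hasDerivWithinAt)
    (injOn_div_one_sub.mono fun y hy => hy.2.ne), intervalIntegral.integral_of_le zero_le_one,
    integral_Ioc_eq_integral_Ioo]
  simp_rw [abs_inv, abs_sq]

lemma integral_mul_exp_neg_mul_Ioi {c : ℝ} (hc : 0 < c) :
    ∫ x in Ioi (0 : ℝ), x * exp (-(c * x)) = 1 / c ^ 2 := by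
  have h := integral_rpow_mul_exp_neg_mul_Ioi two_pos hc
  norm_num [Gamma_two] at h
  simpa [one_div] using h

lemma integrableOn_mul_exp_neg_mul_Ioi {c : ℝ} (hc : 0 < c) :
    IntegrableOn (fun x => x * exp (-(c * x))) (Ioi 0) := by
  simpa [rpow_one, neg_mul] using
    integrableOn_rpow_mul_exp_neg_mul_rpow (p := 1) (s := 1) (by norm_num) zero_lt_one hc

theorem hasSum_integral_mul_of_hasSum_exp {a p : ℕ → ℝ} {F : ℝ → ℝ} (hp : ∀ k, 0 < p k)
    (hF : ∀ t ∈ Ioi (0 : ℝ), HasSum (fun k => a k * exp (-(p k * t))) (F t))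
    (hsum : Summable fun k => |a k| / p k ^ 2) :
    HasSum (fun k => a k / p k ^ 2) (∫ t in Ioi 0, t * F t) := by
  have hterm (b : ℝ) (k : ℕ) : ∫ t in Ioi 0, b * (t * exp (-(p k * t))) = b / p k ^ 2 := by
    rw [integral_const_mul, integral_mul_exp_neg_mul_Ioi (hp k), mul_one_div]
  have hnorm (k : ℕ) : ∫ t in Ioi 0, ‖a k * (t * exp (-(p k * t)))‖ = |a k| / p k ^ 2 := by
    rw [← hterm, setIntegral_congr_fun measurableSet_Ioi fun t (ht : 0 < t) => ?_]
    rw [norm_mul, Real.norm_eq_abs, Real.norm_of_nonneg (by positivity)]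
  have key := hasSum_integral_of_summable_integral_norm
    (fun k => (integrableOn_mul_exp_neg_mul_Ioi (hp k)).const_mul (a k))
    (by simpa only [hnorm] using hsum)
  simp only [hterm] at key
  rwa [setIntegral_congr_fun measurableSet_Ioi fun t ht => ?_] at key
  simp only [mul_left_comm (a _), tsum_mul_left, (hF t ht).tsum_eq]

theorem hasSum_two_div_exp_add_exp_neg {t : ℝ} (ht : 0 < t) :
    HasSum (fun k : ℕ => 2 * (-1) ^ k * exp (-((2 * k + 1) * t))) (2 / (exp t + exp (-t))) := by
  have hr : ‖-exp (-(2 * t))‖ < 1 := by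
    rw [norm_neg, Real.norm_of_nonneg (exp_pos _).le, exp_lt_one_iff]
    linarith
  have hterm (k : ℕ) :
      2 * exp (-t) * (-exp (-(2 * t))) ^ k = 2 * (-1) ^ k * exp (-((2 * k + 1) * t)) := by
    rw [neg_pow, ← exp_nat_mul, show -((2 * k + 1) * t) = -t + k * -(2 * t) by ring, exp_add]
    ring
  have hsum : 2 * exp (-t) * (1 - -exp (-(2 * t)))⁻¹ = 2 / (exp t + exp (-t)) := by
    have hu : 0 < exp (-t) := exp_pos _
    rw [show -(2 * t) = -t + -t by ring, exp_add, ← inv_inv (exp t), ← exp_neg, sub_neg_eq_add]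
    field_simp
  rw [← hsum, ← funext hterm]
  exact (hasSum_geometric_of_norm_lt_one hr).mul_left _

lemma summable_one_div_two_mul_add_one_sq :
    Summable fun k : ℕ => 1 / (2 * (k : ℝ) + 1) ^ 2 := by
  have h := (summable_one_div_nat_pow.mpr one_lt_two).comp_injective
    (i := fun k : ℕ => 2 * k + 1) fun _ _ h => by simpa using h
  simpa [Function.comp_def] using h

theorem integral_mul_two_div_exp_add_exp_neg_Ioi :
    ∫ x in Ioi 0, x * (2 / (exp (π * x / 2) + exp (-(π * x / 2))))
      = 8 * (∑' k : ℕ, (-1 : ℝ) ^ k / (1 + 2 * (k : ℝ)) ^ 2) / π ^ 2 := by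
  have h := hasSum_integral_mul_of_hasSum_exp (a := fun k => 2 * (-1) ^ k)
    (p := fun k => (2 * k + 1) * π / 2) (fun k => by positivity)
    (fun x (hx : 0 < x) => by
      convert hasSum_two_div_exp_add_exp_neg (t := π * x / 2) (by positivity) using 4 with k
      ring)
    ((summable_one_div_two_mul_add_one_sq.mul_left (8 / π ^ 2)).congr fun k => by
      simp only [abs_mul, abs_pow, abs_neg, abs_one, one_pow, abs_two]
      field_simp
      ring)
  calc _ = ∑' k : ℕ, 2 * (-1) ^ k / ((2 * k + 1) * π / 2) ^ 2 := h.tsum_eq.symm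
    _ = ∑' k : ℕ, (-1) ^ k / (1 + 2 * (k : ℝ)) ^ 2 * (8 / π ^ 2) := tsum_congr fun k => by
      field_simp
      ring
    _ = _ := by rw [tsum_mul_right]; ring

theorem ratio_change_of_variable :
    ∫ y in (0:ℝ)..1,
        (y / (1 - y) ^ 3) *
          (2 / (Real.exp (Real.pi * y / (2 * (1 - y))) + Real.exp (-(Real.pi * y / (2 * (1 - y))))))
      = 8 * (∑' k : ℕ, (-1 : ℝ) ^ k / (1 + 2 * (k : ℝ)) ^ 2) / Real.pi ^ 2 := by
  rw [← integral_mul_two_div_exp_add_exp_neg_Ioi, ← integral_comp_div_one_sub]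
  congr 1 with y
  -- `ring` would expand `(1 - y) ^ 3` under the inverse; keep `1 - y` atomic instead.
  generalize 1 - y = z
  rw [smul_eq_mul, show π * y / (2 * z) = π * (y / z) / 2 by ring]
  ring
end
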